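/- arXiv:1412.8148 — 5 statements merged into one kernel-verified Lean document; each statement's English description precedes it below -/
import Mathlib

section
/- Let D = C[x_1,…,x_N, ∂_1,…,∂_N] be the Weyl algebra in N variables and let E = D/(Dx_1 + ··· + Dx_N). If M is a D-module admitting a surjective D-module homomorphism M → E, then M ≠ ∂_1 M + ··· + ∂_N M. -/
/-- Let `D = ℂ[x_1,…,x_N,∂_1,…,∂_N]` be the Weyl algebra and `E = D/(Dx_1 + ⋯ + Dx_N)`.
If `M` is a `D`-module admitting a surjective `D`-module map `M → E`, then
`M ≠ ∂_1 M + ⋯ + ∂_N M` (the top de Rham cohomology of `M` is nonzero).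

A `D`-module is encoded as a `ℂ`-vector space `M` with commuting families of operators
`X i` (action of `x_i`) and `D i` (action of `∂_i`) satisfying `[∂_i, x_j] = δ_{ij}`.
`E = D/(∑ Dx_i)` is realized concretely via its `ℂ`-basis `{∂^a}` as the polynomial
ring `ℂ[∂_1,…,∂_N] = MvPolynomial (Fin N) ℂ`, on which `x_i` acts as `-∂/∂(∂_i)` and `∂_i`
acts as multiplication by the variable `∂_i`; a `D`-module map `p : M → E` commutes with
these actions. -/
theorem stmt_6 (N : ℕ) (M : Type) [AddCommGroup M] [Module ℂ M]
    (X D : Fin N → Module.End ℂ M)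
    (hXX : ∀ i j, X i * X j = X j * X i)
    (hDD : ∀ i j, D i * D j = D j * D i)
    (hDX : ∀ i j, D i * X j - X j * D i = if i = j then 1 else 0)
    (p : M →ₗ[ℂ] MvPolynomial (Fin N) ℂ)
    (hp : Function.Surjective p)
    (hpX : ∀ i, p.comp (X i) = (-(MvPolynomial.pderiv i).toLinearMap).comp p)
    (hpD : ∀ i, p.comp (D i) =
      (LinearMap.mulLeft ℂ (MvPolynomial.X i : MvPolynomial (Fin N) ℂ)).comp p) :
    (⨆ i : Fin N, LinearMap.range (D i)) ≠ ⊤ := by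
  intro h
  -- φ = constant coefficient after p
  set φ : M →ₗ[ℂ] ℂ :=
    ((MvPolynomial.aeval (fun _ : Fin N => (0 : ℂ))).toLinearMap).comp p with hφ
  have hker : (⨆ i : Fin N, LinearMap.range (D i)) ≤ LinearMap.ker φ := by
    refine iSup_le fun i => ?_
    rintro _ ⟨m, rfl⟩
    have := congrArg (fun f : M →ₗ[ℂ] MvPolynomial (Fin N) ℂ => f m) (hpD i)
    simp only [LinearMap.comp_apply, LinearMap.mulLeft_apply] at this
    simp [φ, this]
  obtain ⟨m, hm⟩ := hp 1
  have hm1 : φ m = 1 := by simp [φ, hm]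
  have : m ∈ LinearMap.ker φ := hker (h ▸ Submodule.mem_top)
  rw [LinearMap.mem_ker, hm1] at this
  exact one_ne_zero this
end

section
/- Let λ = (λ_1 ≥ ··· ≥ λ_n) ∈ Z^n be a weakly decreasing integer sequence with n ≥ 2, let u = n+1, and for 1 ≤ i ≤ n set λ^i = (λ_1+1-u, …, λ_{i-1}+1-u, λ_{i+1}-u, …, λ_n-u) ∈ Z^{n-1}. Define ν_μ = 1 if μ ∈ Z^{n-1} is weakly decreasing with all entries nonnegative and even, and ν_μ = 0 otherwise. Then for each 1 ≤ i ≤ n, at most one of the following can fail to be all-zero: {ν_{λ^1},…,ν_{λ^{i-1}}} and {ν_{λ^{i+1}},…,ν_{λ^n}}. In particular, at most two of ν_{λ^1},…,ν_{λ^n} are nonzero, and if two are nonzero they occur at consecutive indices. -/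
/-- For a weight `l = (l_1 ≥ ⋯ ≥ l_n)` and `1 ≤ i ≤ n`, the weight
`l^i = (l_1+1-u, …, l_{i-1}+1-u, l_{i+1}-u, …, l_n-u) ∈ ℤ^{n-1}` (0-indexed here). -/
def lamb (n : ℕ) (u : ℤ) (l : Fin n → ℤ) (i : Fin n) : Fin (n - 1) → ℤ :=
  fun j =>
    if (j : ℕ) < (i : ℕ) then l ⟨j, by have := j.isLt; omega⟩ + 1 - u
    else l ⟨(j : ℕ) + 1, by have := j.isLt; omega⟩ - u

open scoped Classical in
/-- `ν_μ = 1` if `μ` is weakly decreasing with all entries nonnegative and even,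
and `ν_μ = 0` otherwise (the `d = 2` stable plethysm multiplicity). -/
noncomputable def nu {m : ℕ} (μ : Fin m → ℤ) : ℕ :=
  if Antitone μ ∧ ∀ j, 0 ≤ μ j ∧ Even (μ j) then 1 else 0

lemma nu_even {m : ℕ} {μ : Fin m → ℤ} (h : nu μ ≠ 0) : ∀ j, Even (μ j) := by
  rw [nu] at h
  split_ifs at h with hc
  · exact fun j => (hc.2 j).2
  · simp at h

lemma key (n : ℕ) (hn : 2 ≤ n) (l : Fin n → ℤ) (i j : Fin n) (hij : i < j)
    (h1 : nu (lamb n ((n : ℤ) + 1) l i) ≠ 0)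
    (h2 : nu (lamb n ((n : ℤ) + 1) l j) ≠ 0) : (j : ℕ) = (i : ℕ) + 1 := by
  by_contra hne
  have hij' : (i : ℕ) < (j : ℕ) := hij
  have hjlt : (j : ℕ) < n := j.isLt
  have h2le : (i : ℕ) + 2 ≤ (j : ℕ) := by omega
  have hE1 := nu_even h1 ⟨(i : ℕ), by omega⟩
  have hE2 := nu_even h2 ⟨(i : ℕ) + 1, by omega⟩
  simp only [lamb] at hE1 hE2
  rw [if_neg (by omega)] at hE1
  rw [if_pos (by omega)] at hE2
  
  rw [Int.even_iff] at hE1 hE2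
  omega

/-- (`d = 2` parity analysis.)  Let `λ = (λ_1 ≥ ⋯ ≥ λ_n) ∈ ℤ^n`, `n ≥ 2`, `u = n+1`, and
`λ^i`, `ν` as above.  Then for each `i`, at most one of the two families
`{ν_{λ^1},…,ν_{λ^{i-1}}}` and `{ν_{λ^{i+1}},…,ν_{λ^n}}` can fail to be all-zero.
In particular, at most two of `ν_{λ^1},…,ν_{λ^n}` are nonzero, and if two are nonzero
they occur at consecutive indices. -/
theorem stmt_9 (n : ℕ) (hn : 2 ≤ n) (l : Fin n → ℤ) (hl : Antitone l) :
    (∀ i : Fin n,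
      (∀ j : Fin n, j < i → nu (lamb n ((n : ℤ) + 1) l j) = 0) ∨
      (∀ j : Fin n, i < j → nu (lamb n ((n : ℤ) + 1) l j) = 0)) ∧
    (∀ i j : Fin n, i < j → nu (lamb n ((n : ℤ) + 1) l i) ≠ 0 →
      nu (lamb n ((n : ℤ) + 1) l j) ≠ 0 → (j : ℕ) = (i : ℕ) + 1) := by
  refine ⟨?_, fun i j hij h1 h2 => key n hn l i j hij h1 h2⟩
  intro i
  by_contra hc
  push_neg at hc
  obtain ⟨⟨j1, hj1, hν1⟩, ⟨j2, hj2, hν2⟩⟩ := hc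
  have h12 : j1 < j2 := lt_trans hj1 hj2
  have := key n hn l j1 j2 h12 hν1 hν2
  have : (j1 : ℕ) < (i : ℕ) := hj1
  have : (i : ℕ) < (j2 : ℕ) := hj2
  omega
end

section
/- With the notation of the d = 2 case (u = n+1, λ^i as above, ν_μ = 1 iff μ is a partition with all parts even, else 0), define m_λ = ∑_{i=1}^n (-1)^{n-i} ν_{λ^i}. If ν_{λ^i} = 1 for some 1 < i < n, then m_λ = 0. -/
lemma nu_zero_or_one {m : ℕ} (μ : Fin m → ℤ) : nu μ = 0 ∨ nu μ = 1 := by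
  unfold nu; split <;> simp

lemma nu_eq_one_iff {m : ℕ} (μ : Fin m → ℤ) (hant : Antitone μ) :
    nu μ = 1 ↔ ∀ j, 0 ≤ μ j ∧ Even (μ j) := by
  unfold nu
  split
  · next h => simpa using h.2
  · next h =>
      exact iff_of_false (by norm_num) (fun hall => h ⟨hant, hall⟩)

lemma lamb_antitone (n : ℕ) (u : ℤ) (l : Fin n → ℤ) (hl : Antitone l) (i : Fin n) :
    Antitone (lamb n u l i) := by
  intro s t hst
  have hst' : (s : ℕ) ≤ (t : ℕ) := hst
  have key : ∀ (p q : ℕ) (hp : p < n) (hq : q < n), p ≤ q → l ⟨q, hq⟩ ≤ l ⟨p, hp⟩ :=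
    fun p q hp hq h => hl (Fin.mk_le_mk.mpr h)
  unfold lamb
  by_cases hs : (s : ℕ) < (i : ℕ) <;> by_cases ht : (t : ℕ) < (i : ℕ)
  · rw [if_pos hs, if_pos ht]
    have := key s t (by omega) (by omega) hst'
    omega
  · rw [if_pos hs, if_neg ht]
    have := key s (t + 1) (by omega) (by have := t.isLt; omega) (by omega)
    omega
  · omega
  · rw [if_neg hs, if_neg ht]
    have := key (s + 1) (t + 1) (by have := s.isLt; omega) (by have := t.isLt; omega)
      (by omega)
    omega

lemma cancel_pair {n : ℕ} (ν : Fin n → ℕ) (k1 k2 : Fin n) (hadj : (k2 : ℕ) = (k1 : ℕ) + 1)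
    (h1 : ν k1 = 1) (h2 : ν k2 = 1)
    (h0 : ∀ j : Fin n, j ≠ k1 → j ≠ k2 → ν j = 0) :
    ∑ j : Fin n, (-1 : ℤ) ^ (n - 1 - (j : ℕ)) * ν j = 0 := by
  have hne : k1 ≠ k2 := by
    intro h; rw [h] at hadj; omega
  have hsum : ∑ j : Fin n, (-1 : ℤ) ^ (n - 1 - (j : ℕ)) * ν j
      = ∑ j ∈ ({k1, k2} : Finset (Fin n)), (-1 : ℤ) ^ (n - 1 - (j : ℕ)) * ν j := by
    refine (Finset.sum_subset (Finset.subset_univ _) ?_).symm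
    intro j _ hj
    simp only [Finset.mem_insert, Finset.mem_singleton] at hj
    push_neg at hj
    rw [h0 j hj.1 hj.2]
    simp
  rw [hsum, Finset.sum_pair hne, h1, h2]
  have hk2 : (k2 : ℕ) < n := k2.isLt
  have e1 : n - 1 - (k1 : ℕ) = (n - 1 - (k2 : ℕ)) + 1 := by omega
  rw [e1, pow_succ]
  ring

/-- (`d = 2` case, `u = n+1`.)  With `m_λ = ∑_{i=1}^n (-1)^{n-i} ν_{λ^i}`:
if `ν_{λ^i} = 1` for some interior index `1 < i < n`, then `m_λ = 0`. -/
theorem stmt_10 (n : ℕ) (hn : 2 ≤ n) (l : Fin n → ℤ) (hl : Antitone l)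
    (h : ∃ i : Fin n, 0 < (i : ℕ) ∧ (i : ℕ) < n - 1 ∧ nu (lamb n ((n : ℤ) + 1) l i) = 1) :
    ∑ i : Fin n, (-1 : ℤ) ^ (n - 1 - (i : ℕ)) * nu (lamb n ((n : ℤ) + 1) l i) = 0 := by
  obtain ⟨i, hi0, hi1, hne⟩ := h
  set u : ℤ := (n : ℤ) + 1 with hu
  -- abbreviation for the entries of `l` indexed by naturals
  set a : ℕ → ℤ := fun m => if hm : m < n then l ⟨m, hm⟩ else 0 with ha
  have hmono : ∀ p q : ℕ, p ≤ q → q < n → a q ≤ a p := by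
    intro p q hpq hq
    simp only [ha, dif_pos hq, dif_pos (by omega : p < n)]
    exact hl (Fin.mk_le_mk.mpr hpq)
  -- entries of `lamb` in terms of `a`
  set ent : ℕ → ℕ → ℤ := fun j m => if m < j then a m + 1 - u else a (m + 1) - u with hent
  have hlamb : ∀ (j : Fin n) (t : Fin (n - 1)),
      lamb n u l j t = ent (j : ℕ) (t : ℕ) := by
    intro j t
    have h1 : (t : ℕ) < n := by have := t.isLt; omega
    have h2 : (t : ℕ) + 1 < n := by have := t.isLt; omega
    simp only [lamb, hent, ha]
    by_cases htj : (t : ℕ) < (j : ℕ)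
    · rw [if_pos htj, if_pos htj, dif_pos h1]
    · rw [if_neg htj, if_neg htj, dif_pos h2]
  -- characterization of `nu` via `ent`
  have hiff : ∀ j : Fin n, nu (lamb n u l j) = 1 ↔
      ∀ m, m < n - 1 → 0 ≤ ent (j : ℕ) m ∧ ent (j : ℕ) m % 2 = 0 := by
    intro j
    rw [nu_eq_one_iff _ (lamb_antitone n u l hl j)]
    constructor
    · intro H m hm
      have := H ⟨m, hm⟩
      rw [hlamb j ⟨m, hm⟩] at this
      exact ⟨this.1, Int.even_iff.mp this.2⟩
    · intro H t
      rw [hlamb j t]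
      exact ⟨(H t t.isLt).1, Int.even_iff.mpr (H t t.isLt).2⟩
  set I : ℕ := (i : ℕ) with hI
  have hIn : I < n - 1 := hi1
  have Hi : ∀ m, m < n - 1 → 0 ≤ ent I m ∧ ent I m % 2 = 0 := (hiff i).mp hne
  -- key parity facts about neighbours of position I
  have hIlt : ¬ (I < I) := lt_irrefl I
  have HiI := Hi I hIn            -- about a (I+1) - u
  rw [show ent I I = a (I + 1) - u from by rw [hent]; exact if_neg hIlt] at HiI
  by_cases hpar : (a I + 1 - u) % 2 = 0
  · -- Case 1: partner is i+1
    have hI1n : I + 1 < n := by omega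
    refine cancel_pair _ i ⟨I + 1, hI1n⟩ rfl hne ?_ ?_
    · rw [hiff ⟨I + 1, hI1n⟩]
      intro m hm
      by_cases hmI : m < I
      · have := Hi m hm
        rw [show ent I m = a m + 1 - u from by rw [hent]; exact if_pos hmI] at this
        rw [show ent (I + 1) m = a m + 1 - u from by rw [hent]; exact if_pos (by omega)]
        exact this
      · by_cases hmI' : m = I
        · rw [show ent (I + 1) m = a m + 1 - u from by rw [hent]; exact if_pos (by omega)]
          rw [hmI']
          have h1 := hmono I (I + 1) (by omega) (by omega)
          exact ⟨by omega, hpar⟩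
        · have := Hi m hm
          rw [show ent I m = a (m + 1) - u from by rw [hent]; exact if_neg (by omega)] at this
          rw [show ent (I + 1) m = a (m + 1) - u from by
            rw [hent]; exact if_neg (by omega)]
          exact this
    · intro j hj1 hj2
      have hjI : (j : ℕ) ≠ I := fun h => hj1 (Fin.ext h)
      have hjI1 : (j : ℕ) ≠ I + 1 := fun h => hj2 (Fin.ext h)
      rcases nu_zero_or_one (lamb n u l j) with h0 | h1
      · exact h0
      · exfalso
        rw [hiff j] at h1
        by_cases hjlt : (j : ℕ) < I
        · -- entry at I-1 is a I - u, odd by hpar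
          have := h1 (I - 1) (by omega)
          rw [show ent (j : ℕ) (I - 1) = a (I - 1 + 1) - u from by
            rw [hent]; exact if_neg (by omega)] at this
          rw [show I - 1 + 1 = I from by omega] at this
          omega
        · -- j ≥ I+2 : entry at I+1 is a (I+1) + 1 - u, odd since a (I+1) - u even
          have hj2' : I + 2 ≤ (j : ℕ) := by omega
          have := h1 (I + 1) (by have := j.isLt; omega)
          rw [show ent (j : ℕ) (I + 1) = a (I + 1) + 1 - u from by
            rw [hent]; exact if_pos (by omega)] at this
          omega
  · -- Case 2: partner is i-1
    have hI1n : I - 1 < n := by omega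
    refine cancel_pair _ ⟨I - 1, hI1n⟩ i (by simp; omega) ?_ hne ?_
    · rw [hiff ⟨I - 1, hI1n⟩]
      intro m hm
      by_cases hmI : m < I - 1
      · have := Hi m hm
        rw [show ent I m = a m + 1 - u from by rw [hent]; exact if_pos (by omega)] at this
        rw [show ent (I - 1) m = a m + 1 - u from by rw [hent]; exact if_pos hmI]
        exact this
      · by_cases hmI' : m = I - 1
        · subst hmI'
          rw [show ent (I - 1) (I - 1) = a (I - 1 + 1) - u from by
            rw [hent]; exact if_neg (by omega)]
          rw [show I - 1 + 1 = I from by omega]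
          have h1 := hmono I (I + 1) (by omega) (by omega)
          constructor
          · omega
          · omega
        · have := Hi m hm
          rw [show ent I m = a (m + 1) - u from by rw [hent]; exact if_neg (by omega)] at this
          rw [show ent (I - 1) m = a (m + 1) - u from by
            rw [hent]; exact if_neg (by omega)]
          exact this
    · intro j hj1 hj2
      have hjI1 : (j : ℕ) ≠ I - 1 := by
        intro h; exact hj1 (Fin.ext (by simpa using h))
      have hjI : (j : ℕ) ≠ I := fun h => hj2 (Fin.ext h)
      rcases nu_zero_or_one (lamb n u l j) with h0 | h1
      · exact h0
      · exfalso
        rw [hiff j] at h1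
        by_cases hjlt : (j : ℕ) < I - 1
        · -- j ≤ I-2 : entry at I-2 is a (I-1) - u, odd since a (I-1) + 1 - u even
          have hI2 : 2 ≤ I := by omega
          have hprev := Hi (I - 1) (by omega)
          rw [show ent I (I - 1) = a (I - 1) + 1 - u from by
            rw [hent]; exact if_pos (by omega)] at hprev
          have := h1 (I - 2) (by omega)
          rw [show ent (j : ℕ) (I - 2) = a (I - 2 + 1) - u from by
            rw [hent]; exact if_neg (by omega)] at this
          rw [show I - 2 + 1 = I - 1 from by omega] at this
          omega
        · -- j ≥ I+1 : entry at I is a I + 1 - u, odd by ¬hpar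
          have := h1 I hIn
          rw [show ent (j : ℕ) I = a I + 1 - u from by
            rw [hent]; exact if_pos (by omega)] at this
          omega
end

section
/- Let S = Sym(Sym^d V) for a complex vector space V of dimension n, graded by GL(V)-isotypic components. If λ is a hook partition (λ_2 ≤ 1) with λ_2 = 1, then the multiplicity of the Schur functor S_λ V in S is zero; if λ = (kd, 0, …, 0) for k ≥ 0 then this multiplicity equals 1. -/
/-!
A highest weight vector `p` of weight `λ` is a combination of monomials `∏ X_b ^ e_b` of torus
weight `λ` (the `X_b` are indexed by the monomials `x^b` of degree `d`), and it is fixed by the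
transvections `1 + E_ij`, `i < j`, which substitute `x_j ↦ x_j + x_i`. When `λ_j = 1`, each monomial
of `p` has exactly one factor `X_b` with `b_j ≠ 0`, to the first power, and `b_j = 1`; so `1 + E_ij`
sends the monomial to itself plus the monomial in which `X_b` is replaced by `X_{b - e_j + e_i}`.
Invariance makes these raised monomials cancel, so no monomial of `p` is the only one of `p` with
its raised monomial.

For a hook `λ` with `λ_1 = 1` (indices start at `0`) this is first used for `i < j` with
`λ_i = λ_j = 1`: the raised monomial then has `i`-weight `2`, concentrated on one factor, which pins
down its preimage; hence every factor `X_b` with some `b_l ≠ 0`, `l ≥ 1`, is `X_{(d-1)e_0 + e_l}`.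
Then raising by `E_01` is injective on the monomials of `p`, so `p = 0`. For `λ = (kd, 0, …, 0)`
the weight alone forces every monomial to be `X_{d e_0}^k`, and that is a highest weight vector.
-/


/-- The monomial basis of `Sym^d V` for `dim V = n`: exponent vectors of total degree `d`. -/
def VB (n d : ℕ) : Type := {m : Fin n →₀ ℕ // (m.sum fun _ e => e) = d}

/-- The linear projection sending a polynomial in `x_1,…,x_n` to the corresponding element
of `Sym(Sym^d V)` (realized as the polynomial ring on the monomial basis of `Sym^d V`),
nonzero only on the degree-`d` homogeneous part. -/
noncomputable def toS (n d : ℕ) (p : MvPolynomial (Fin n) ℂ) : MvPolynomial (VB n d) ℂ :=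
  ∑ m ∈ p.support,
    if h : (m.sum fun _ e => e) = d then
      MvPolynomial.coeff m p • MvPolynomial.X (⟨m, h⟩ : VB n d)
    else 0

/-- The action of a matrix `g ∈ GL_n` on `S = Sym(Sym^d V)`: `g` acts on degree-`d`
polynomials in `x_1,…,x_n` by the substitution `x_i ↦ ∑_j g_{ji} x_j`, and this is
transported to the polynomial ring on the monomial basis of `Sym^d V` by substitution. -/
noncomputable def glAct (n d : ℕ) (g : Matrix (Fin n) (Fin n) ℂ) :
    MvPolynomial (VB n d) ℂ →ₐ[ℂ] MvPolynomial (VB n d) ℂ :=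
  MvPolynomial.aeval fun b =>
    toS n d (MvPolynomial.aeval (fun i => ∑ j, g j i • MvPolynomial.X j)
      (MvPolynomial.monomial b.1 (1 : ℂ)))

/-- The space of highest weight vectors of weight `λ` in `S = Sym(Sym^d V)`: vectors on
which every diagonal matrix `diag(t)` acts by `∏ t_i^{λ_i}` and which are fixed by every
upper-triangular unipotent matrix.  Its dimension is the multiplicity of the Schur
functor `S_λ V` in `S`. -/
noncomputable def hwv (n d : ℕ) (lam : Fin n → ℕ) :
    Submodule ℂ (MvPolynomial (VB n d) ℂ) :=
  (⨅ t : Fin n → ℂˣ,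
    Module.End.eigenspace
      ((glAct n d (Matrix.diagonal fun i => (t i : ℂ))).toLinearMap)
      (∏ i, (t i : ℂ) ^ lam i)) ⊓
  (⨅ u : {u : Matrix (Fin n) (Fin n) ℂ //
      (∀ i, u i i = 1) ∧ ∀ i j : Fin n, j < i → u i j = 0},
    Module.End.eigenspace ((glAct n d u.1).toLinearMap) 1)

open MvPolynomial

namespace MvPolynomial

variable {σ R : Type*} [CommSemiring R]

theorem algHom_monomial_eq_self (φ : MvPolynomial σ R →ₐ[R] MvPolynomial σ R)
    {m : σ →₀ ℕ} (hφ : ∀ s ∈ m.support, φ (X s) = X s) (c : R) :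
    φ (monomial m c) = monomial m c := by
  rw [monomial_eq, map_mul, ← algebraMap_eq, φ.commutes, map_finsuppProd]
  exact congrArg _ (Finsupp.prod_congr fun s hs => by rw [map_pow, hφ s hs])

theorem monomial_eq_monomial_erase_mul_X {m : σ →₀ ℕ} {s : σ} (hs : m s = 1) (c : R) :
    monomial m c = monomial (m.erase s) c * X s := by
  conv_lhs => rw [← Finsupp.erase_add_single s m, hs]
  rw [monomial_add_single, pow_one]

theorem aeval_smul_X_monomial (t : σ → R) (m : σ →₀ ℕ) (c : R) :
    aeval (fun s => t s • X s) (monomial m c) = (m.prod fun s k => t s ^ k) • monomial m c := by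
  rw [aeval_monomial, monomial_eq, smul_eq_C_mul, map_finsuppProd C, algebraMap_eq]
  simp only [smul_eq_C_mul, mul_pow, ← C_pow]
  rw [Finsupp.prod_mul]
  ring

theorem coeff_aeval_smul_X (t : σ → R) (p : MvPolynomial σ R) (m : σ →₀ ℕ) :
    coeff m (aeval (fun s => t s • X s) p) = (m.prod fun s k => t s ^ k) * coeff m p := by
  classical
  induction p using induction_on' with
  | monomial m' c =>
    rw [aeval_smul_X_monomial, coeff_smul, coeff_monomial, smul_eq_mul]
    split_ifs with h
    · rw [h]
    · simp
  | add p q hp hq => rw [map_add, coeff_add, coeff_add, hp, hq, mul_add]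

end MvPolynomial

namespace Finsupp

variable {σ : Type*}

theorem degree_erase_add (m : σ →₀ ℕ) (s : σ) : degree (m.erase s) + m s = degree m := by
  conv_rhs => rw [← erase_add_single s m]
  rw [map_add, degree_single]

theorem eq_of_degree_eq_of_forall_ne {f g : σ →₀ ℕ} (s : σ) (hdeg : degree f = degree g)
    (h : ∀ l ≠ s, f l = g l) : f = g := by
  have herase : f.erase s = g.erase s := by
    ext l
    rcases eq_or_ne l s with rfl | hl
    · simp
    · simp [erase_ne hl, h l hl]
  have hs : f s = g s := by
    have := degree_erase_add f s
    rw [herase, hdeg, ← degree_erase_add g s] at this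
    omega
  rw [← erase_add_single s f, ← erase_add_single s g, herase, hs]

end Finsupp

variable {n d : ℕ}

namespace VB

/-- `Finsupp.weight VB.weight e` is the torus weight of the monomial `∏ X_b ^ e b` of `S`. -/
def weight (b : VB n d) : Fin n → ℕ := b.1

noncomputable def single (i : Fin n) (d : ℕ) : VB n d :=
  ⟨Finsupp.single i d, Finsupp.degree_single i d⟩

noncomputable def raise (i j : Fin n) (b : VB n d) : VB n d :=
  ⟨if b.1 j = 1 then b.1.erase j + Finsupp.single i 1 else b.1, by
    have hb : Finsupp.degree b.1 = d := b.2
    have := Finsupp.degree_erase_add b.1 j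
    change Finsupp.degree (ite _ _ _) = d
    split_ifs
    · rw [map_add, Finsupp.degree_single]
      omega
    · exact hb⟩

theorem raise_val {i j : Fin n} {b : VB n d} (h : b.1 j = 1) :
    (b.raise i j).1 = b.1.erase j + Finsupp.single i 1 :=
  if_pos h

theorem eq_of_raise_eq {i j : Fin n} {b b' : VB n d} (hb : b.1 j = 1) (hb' : b'.1 j = 1)
    (h : b.raise i j = b'.raise i j) : b = b' := by
  have herase : b.1.erase j = b'.1.erase j :=
    add_right_cancel (by rw [← raise_val hb, ← raise_val hb', h])
  apply Subtype.ext
  rw [← Finsupp.erase_add_single j b.1, ← Finsupp.erase_add_single j b'.1, herase, hb, hb']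

end VB

section Weight

variable (e : VB n d →₀ ℕ)

theorem weight_apply (i : Fin n) :
    Finsupp.weight VB.weight e i = e.sum fun b k => k * b.1 i := by
  simp only [Finsupp.weight_apply, Finsupp.sum, Finset.sum_apply]
  rfl

theorem weight_apply_erase_add (b : VB n d) (i : Fin n) :
    Finsupp.weight VB.weight (e.erase b) i + e b * b.1 i = Finsupp.weight VB.weight e i := by
  conv_rhs => rw [← Finsupp.erase_add_single b e]
  rw [map_add, Pi.add_apply, Finsupp.weight_single, Pi.smul_apply, smul_eq_mul]
  rfl

theorem mul_le_weight_apply (b : VB n d) (i : Fin n) :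
    e b * b.1 i ≤ Finsupp.weight VB.weight e i := by
  have := weight_apply_erase_add e b i
  omega

theorem add_mul_le_weight_apply {b b' : VB n d} (hne : b ≠ b') (i : Fin n) :
    e b * b.1 i + e b' * b'.1 i ≤ Finsupp.weight VB.weight e i := by
  have h := mul_le_weight_apply (e.erase b) b' i
  rw [Finsupp.erase_ne hne.symm] at h
  have := weight_apply_erase_add e b i
  omega

theorem exists_apply_ne_zero_of_weight_apply_ne_zero {j : Fin n}
    (h : Finsupp.weight VB.weight e j ≠ 0) : ∃ b, e b ≠ 0 ∧ b.1 j ≠ 0 := by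
  rw [weight_apply] at h
  obtain ⟨b, -, hb⟩ := Finset.exists_ne_zero_of_sum_ne_zero h
  exact ⟨b, left_ne_zero_of_mul hb, right_ne_zero_of_mul hb⟩

variable {e}

theorem eq_one_of_weight_apply_eq_one {j : Fin n} (h : Finsupp.weight VB.weight e j = 1)
    {b : VB n d} (hb : e b ≠ 0) (hbj : b.1 j ≠ 0) : e b = 1 ∧ b.1 j = 1 :=
  mul_eq_one.mp (le_antisymm (h ▸ mul_le_weight_apply e b j)
    (Nat.pos_of_ne_zero (mul_ne_zero hb hbj)))

theorem eq_of_weight_apply_eq_one {j : Fin n} (h : Finsupp.weight VB.weight e j = 1)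
    {b b' : VB n d} (hb : e b ≠ 0) (hbj : b.1 j ≠ 0) (hb' : e b' ≠ 0) (hb'j : b'.1 j ≠ 0) :
    b = b' := by
  by_contra hne
  have := add_mul_le_weight_apply e hne j
  have := Nat.pos_of_ne_zero (mul_ne_zero hb hbj)
  have := Nat.pos_of_ne_zero (mul_ne_zero hb' hb'j)
  omega

end Weight

theorem toS_monomial (b : VB n d) (c : ℂ) : toS n d (monomial b.1 c) = c • X b := by
  classical
  rcases eq_or_ne c 0 with rfl | hc
  · simp [toS]
  · rw [toS, support_monomial, if_neg hc, Finset.sum_singleton, dif_pos b.2, coeff_monomial,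
      if_pos rfl]
    rfl

theorem toS_add (p q : MvPolynomial (Fin n) ℂ) : toS n d (p + q) = toS n d p + toS n d q := by
  classical
  let f : (Fin n →₀ ℕ) → ℂ → MvPolynomial (VB n d) ℂ := fun m c =>
    if h : (m.sum fun _ e => e) = d then c • X ⟨m, h⟩ else 0
  change (AddMonoidAlgebra.coeff (p + q)).sum f =
    (AddMonoidAlgebra.coeff p).sum f + (AddMonoidAlgebra.coeff q).sum f
  rw [AddMonoidAlgebra.coeff_add]
  exact Finsupp.sum_add_index' (fun _ => by simp [f])
    (fun _ _ _ => by simp only [f]; split <;> simp [add_smul])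

theorem glAct_X (g : Matrix (Fin n) (Fin n) ℂ) (b : VB n d) :
    glAct n d g (X b) = toS n d (aeval (fun i => ∑ j, g j i • X j) (monomial b.1 (1 : ℂ))) :=
  aeval_X _ b

theorem glAct_diagonal_X (t : Fin n → ℂ) (b : VB n d) :
    glAct n d (Matrix.diagonal t) (X b) = (∏ i, t i ^ b.1 i) • X b := by
  have hcol : (fun i => ∑ j, Matrix.diagonal t j i • X j : Fin n → MvPolynomial (Fin n) ℂ) =
      fun i => t i • X i := by
    funext i
    rw [Finset.sum_eq_single i (fun j _ hj => by rw [Matrix.diagonal_apply_ne _ hj, zero_smul])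
      (fun h => absurd (Finset.mem_univ i) h), Matrix.diagonal_apply_eq]
  rw [glAct_X, hcol, aeval_smul_X_monomial, smul_monomial, smul_eq_mul, mul_one, toS_monomial,
    Finsupp.prod_fintype _ _ fun _ => pow_zero _]

theorem coeff_glAct_diagonal (t : Fin n → ℂ) (p : MvPolynomial (VB n d) ℂ)
    (e : VB n d →₀ ℕ) :
    coeff e (glAct n d (Matrix.diagonal t) p) =
      (∏ i, t i ^ Finsupp.weight VB.weight e i) * coeff e p := by
  have hact : glAct n d (Matrix.diagonal t) = aeval fun b => (∏ i, t i ^ b.1 i) • X b :=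
    algHom_ext fun b => by rw [glAct_diagonal_X, aeval_X]
  rw [hact, coeff_aeval_smul_X]
  congr 1
  simp only [weight_apply, Finsupp.prod, Finsupp.sum, ← Finset.prod_pow_eq_pow_sum,
    ← Finset.prod_pow, pow_mul']
  exact Finset.prod_comm

theorem sum_transvection_smul_X (i j c : Fin n) :
    ∑ a, Matrix.transvection i j (1 : ℂ) a c • (X a : MvPolynomial (Fin n) ℂ) =
      X c + if c = j then X i else 0 := by
  simp [Matrix.transvection, Matrix.one_apply, Matrix.single_apply, add_smul,
    Finset.sum_add_distrib, ite_smul, ite_and, eq_comm]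

theorem glAct_transvection_X_of_eq_zero (i : Fin n) {j : Fin n} {b : VB n d}
    (hb : b.1 j = 0) :
    glAct n d (Matrix.transvection i j 1) (X b) = X b := by
  rw [glAct_X, algHom_monomial_eq_self, toS_monomial, one_smul]
  intro c hc
  have hcj : c ≠ j := by rintro rfl; exact Finsupp.mem_support_iff.mp hc hb
  rw [aeval_X, sum_transvection_smul_X, if_neg hcj, add_zero]

theorem glAct_transvection_X_of_eq_one (i : Fin n) {j : Fin n} {b : VB n d}
    (hb : b.1 j = 1) :
    glAct n d (Matrix.transvection i j 1) (X b) = X b + X (b.raise i j) := by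
  have hfix : ∀ c ∈ (b.1.erase j).support,
      aeval (fun c => ∑ a, Matrix.transvection i j (1 : ℂ) a c •
        (X a : MvPolynomial (Fin n) ℂ)) (X c : MvPolynomial (Fin n) ℂ) = X c := by
    intro c hc
    have hcj : c ≠ j := by rintro rfl; simp at hc
    rw [aeval_X, sum_transvection_smul_X, if_neg hcj, add_zero]
  rw [glAct_X, monomial_eq_monomial_erase_mul_X hb, map_mul, algHom_monomial_eq_self _ hfix,
    aeval_X, sum_transvection_smul_X, if_pos rfl, mul_add,
    ← monomial_eq_monomial_erase_mul_X hb, ← pow_one (X i), ← monomial_add_single,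
    ← VB.raise_val hb, toS_add, toS_monomial, toS_monomial, one_smul, one_smul]

theorem glAct_transvection_monomial (i : Fin n) {j : Fin n} {e : VB n d →₀ ℕ} {b : VB n d}
    (hbe : e b = 1) (hbj : b.1 j = 1) (hrest : ∀ b' ∈ (e.erase b).support, b'.1 j = 0)
    (c : ℂ) :
    glAct n d (Matrix.transvection i j 1) (monomial e c) =
      monomial e c + monomial (e.erase b + Finsupp.single (b.raise i j) 1) c := by
  rw [monomial_eq_monomial_erase_mul_X hbe, map_mul,
    algHom_monomial_eq_self _ fun b' hb' => glAct_transvection_X_of_eq_zero i (hrest b' hb'),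
    glAct_transvection_X_of_eq_one i hbj, mul_add, ← pow_one (X (b.raise i j)),
    ← monomial_add_single]

open scoped Classical in
/-- For `e` of `j`-weight `1`: the exponent in which the unique factor `X_b` with `b_j ≠ 0` is
replaced by `X_{b.raise i j}`, i.e. the new term that `1 + E_ij` makes out of the monomial `X^e`. -/
noncomputable def raiseExponent (i j : Fin n) (e : VB n d →₀ ℕ) : VB n d →₀ ℕ :=
  if h : ∃ b, e b ≠ 0 ∧ b.1 j ≠ 0 then
    e.erase h.choose + Finsupp.single (h.choose.raise i j) 1
  else e

section Raise

variable {i j : Fin n} {e e' : VB n d →₀ ℕ} {b : VB n d}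

theorem raiseExponent_eq (h : Finsupp.weight VB.weight e j = 1) (hb : e b ≠ 0)
    (hbj : b.1 j ≠ 0) :
    raiseExponent i j e = e.erase b + Finsupp.single (b.raise i j) 1 := by
  have hex : ∃ b, e b ≠ 0 ∧ b.1 j ≠ 0 := ⟨b, hb, hbj⟩
  rw [raiseExponent, dif_pos hex,
    eq_of_weight_apply_eq_one h hex.choose_spec.1 hex.choose_spec.2 hb hbj]

theorem weight_apply_raiseExponent (hij : i ≠ j) (h : Finsupp.weight VB.weight e j = 1)
    (hb : e b ≠ 0) (hbj : b.1 j ≠ 0) :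
    Finsupp.weight VB.weight (raiseExponent i j e) i = Finsupp.weight VB.weight e i + 1 := by
  obtain ⟨hb1, hbj1⟩ := eq_one_of_weight_apply_eq_one h hb hbj
  have := weight_apply_erase_add e b i
  rw [raiseExponent_eq h hb hbj, map_add, Pi.add_apply, Finsupp.weight_single, Pi.smul_apply,
    one_smul]
  change _ + (b.raise i j).1 i = _
  rw [VB.raise_val hbj1, Finsupp.add_apply, Finsupp.erase_ne hij, Finsupp.single_eq_same]
  rw [hb1, one_mul] at this
  omega

theorem eq_of_raiseExponent_eq (he : Finsupp.weight VB.weight e j = 1)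
    (he' : Finsupp.weight VB.weight e' j = 1) (hb : e b ≠ 0) (hb' : e' b ≠ 0)
    (hbj : b.1 j ≠ 0) (h : raiseExponent i j e = raiseExponent i j e') : e = e' := by
  rw [raiseExponent_eq he hb hbj, raiseExponent_eq he' hb' hbj] at h
  rw [← Finsupp.erase_add_single b e, ← Finsupp.erase_add_single b e', add_right_cancel h,
    (eq_one_of_weight_apply_eq_one he hb hbj).1, (eq_one_of_weight_apply_eq_one he' hb' hbj).1]

theorem eq_of_raiseExponent_eq_of_apply_ne_zero (hij : i ≠ j)
    (hei : Finsupp.weight VB.weight e i = 1) (hej : Finsupp.weight VB.weight e j = 1)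
    (he'j : Finsupp.weight VB.weight e' j = 1) (hb : e b ≠ 0) (hbi : b.1 i ≠ 0)
    (hbj : b.1 j ≠ 0)
    (h : raiseExponent i j e' = raiseExponent i j e) : e' = e := by
  obtain ⟨b', hb', hb'j⟩ :=
    exists_apply_ne_zero_of_weight_apply_ne_zero e' (by rw [he'j]; exact one_ne_zero)
  suffices b' = b from eq_of_raiseExponent_eq he'j hej (this ▸ hb') hb hbj h
  -- The raised exponent has `i`-weight `2`, all of it on the factor `b.raise i j`, and
  -- `b'.raise i j` is a factor of it as well.
  have hbj1 := (eq_one_of_weight_apply_eq_one hej hb hbj).2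
  have hb'j1 := (eq_one_of_weight_apply_eq_one he'j hb' hb'j).2
  have hbi1 := (eq_one_of_weight_apply_eq_one hei hb hbi).2
  have hfi : Finsupp.weight VB.weight (raiseExponent i j e) i = 2 := by
    rw [weight_apply_raiseExponent hij hej hb hbj, hei]
  have hri : (b.raise i j).1 i = 2 := by
    rw [VB.raise_val hbj1, Finsupp.add_apply, Finsupp.erase_ne hij, Finsupp.single_eq_same,
      hbi1]
  have hr'i : (b'.raise i j).1 i ≠ 0 := by
    rw [VB.raise_val hb'j1, Finsupp.add_apply, Finsupp.single_eq_same]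
    exact Nat.succ_ne_zero _
  have hfr : raiseExponent i j e (b.raise i j) ≠ 0 := by rw [raiseExponent_eq hej hb hbj]; simp
  have hfr' : raiseExponent i j e (b'.raise i j) ≠ 0 := by
    rw [← h, raiseExponent_eq he'j hb' hb'j]; simp
  refine VB.eq_of_raise_eq (i := i) hb'j1 hbj1 (by_contra fun hne => ?_)
  have hle := add_mul_le_weight_apply (raiseExponent i j e) (Ne.symm hne) i
  have := Nat.pos_of_ne_zero (mul_ne_zero hfr' hr'i)
  rw [hfi, hri] at hle
  omega

theorem glAct_transvection_monomial_eq_add (h : Finsupp.weight VB.weight e j = 1) (c : ℂ) :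
    glAct n d (Matrix.transvection i j 1) (monomial e c) =
      monomial e c + monomial (raiseExponent i j e) c := by
  obtain ⟨b, hb, hbj⟩ :=
    exists_apply_ne_zero_of_weight_apply_ne_zero e (by rw [h]; exact one_ne_zero)
  obtain ⟨hb1, hbj1⟩ := eq_one_of_weight_apply_eq_one h hb hbj
  rw [raiseExponent_eq h hb hbj]
  refine glAct_transvection_monomial i hb1 hbj1 (fun b' hb' => ?_) c
  have hne : b' ≠ b := by rintro rfl; simp at hb'
  rw [Finsupp.mem_support_iff, Finsupp.erase_ne hne] at hb'
  by_contra hb'j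
  exact hne (eq_of_weight_apply_eq_one h hb' hb'j hb hbj)

variable {p : MvPolynomial (VB n d) ℂ}

theorem sum_monomial_raiseExponent_eq_zero (hp : glAct n d (Matrix.transvection i j 1) p = p)
    (hw : ∀ e ∈ p.support, Finsupp.weight VB.weight e j = 1) :
    ∑ e ∈ p.support, monomial (raiseExponent i j e) (coeff e p) = 0 := by
  have hsum := congrArg (glAct n d (Matrix.transvection i j 1)) p.as_sum
  rw [hp, map_sum, Finset.sum_congr rfl fun e he => glAct_transvection_monomial_eq_add (hw e he) _,
    Finset.sum_add_distrib, ← p.as_sum] at hsum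
  exact left_eq_add.mp hsum

theorem exists_ne_raiseExponent_eq (hp : glAct n d (Matrix.transvection i j 1) p = p)
    (hw : ∀ e ∈ p.support, Finsupp.weight VB.weight e j = 1) (he : e ∈ p.support) :
    ∃ e' ∈ p.support, e' ≠ e ∧ raiseExponent i j e' = raiseExponent i j e := by
  classical
  by_contra! h
  have hcoeff :=
    congrArg (coeff (raiseExponent i j e)) (sum_monomial_raiseExponent_eq_zero hp hw)
  rw [coeff_sum, Finset.sum_eq_single e
      (fun e' he' hne => by rw [coeff_monomial, if_neg (h e' he' hne)]) (fun h => absurd he h),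
    coeff_monomial, if_pos rfl, coeff_zero] at hcoeff
  exact mem_support_iff.mp he hcoeff

end Raise

section HighestWeight

variable {lam : Fin n → ℕ} {p : MvPolynomial (VB n d) ℂ}

theorem mem_hwv_iff : p ∈ hwv n d lam ↔
    (∀ t : Fin n → ℂˣ, glAct n d (Matrix.diagonal fun i => (t i : ℂ)) p =
      (∏ i, (t i : ℂ) ^ lam i) • p) ∧
    ∀ u : Matrix (Fin n) (Fin n) ℂ, (∀ i, u i i = 1) → (∀ i j, j < i → u i j = 0) →
      glAct n d u p = p := by
  simp [hwv, Submodule.mem_inf, Submodule.mem_iInf]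

theorem isWeightedHomogeneous_of_mem_hwv (hp : p ∈ hwv n d lam) :
    IsWeightedHomogeneous VB.weight p lam := by
  intro e he
  funext i
  let t : Fin n → ℂˣ := Pi.mulSingle i (Units.mk0 2 two_ne_zero)
  have ht : ∀ w : Fin n → ℕ, ∏ l, (t l : ℂ) ^ w l = ((2 ^ w i : ℕ) : ℂ) := by
    intro w
    rw [Finset.prod_eq_single i (fun l _ hl => by simp [t, Pi.mulSingle_eq_of_ne hl])
      (fun h => absurd (Finset.mem_univ i) h)]
    simp [t]
  have hcoeff := congrArg (coeff e) ((mem_hwv_iff.mp hp).1 t)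
  rw [coeff_glAct_diagonal, coeff_smul, smul_eq_mul, ht, ht] at hcoeff
  exact Nat.pow_right_injective le_rfl (Nat.cast_injective (mul_right_cancel₀ he hcoeff))

theorem glAct_transvection_eq_self_of_mem_hwv (hp : p ∈ hwv n d lam) {i j : Fin n}
    (hij : i < j) : glAct n d (Matrix.transvection i j 1) p = p := by
  refine (mem_hwv_iff.mp hp).2 _ (fun a => ?_) (fun a b hba => ?_)
  · simp [Matrix.transvection, Matrix.single_apply]
    rintro rfl rfl
    exact lt_irrefl _ hij
  · simp [Matrix.transvection, Matrix.single_apply, hba.ne']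
    rintro rfl rfl
    exact lt_asymm hij hba

theorem weight_eq_of_mem_hwv (hp : p ∈ hwv n d lam) {e : VB n d →₀ ℕ}
    (he : e ∈ p.support) :
    Finsupp.weight VB.weight e = lam :=
  isWeightedHomogeneous_of_mem_hwv hp (mem_support_iff.mp he)

theorem apply_eq_zero_or_apply_eq_zero (hp : p ∈ hwv n d lam) {i j : Fin n} (hij : i < j)
    (hi : lam i = 1) (hj : lam j = 1) {e : VB n d →₀ ℕ} (he : e ∈ p.support) {b : VB n d}
    (hb : e b ≠ 0) : b.1 i = 0 ∨ b.1 j = 0 := by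
  have hw : ∀ e ∈ p.support, Finsupp.weight VB.weight e j = 1 := fun e he => by
    rw [weight_eq_of_mem_hwv hp he, hj]
  by_contra! hbij
  obtain ⟨e', he', hne, hraise⟩ :=
    exists_ne_raiseExponent_eq (glAct_transvection_eq_self_of_mem_hwv hp hij) hw he
  exact hne (eq_of_raiseExponent_eq_of_apply_ne_zero hij.ne
    (by rw [weight_eq_of_mem_hwv hp he, hi]) (hw e he) (hw e' he') hb hbij.1 hbij.2 hraise)

theorem apply_eq_ite_of_hook (hp : p ∈ hwv n d lam)
    (hhook : ∀ l : Fin n, (l : ℕ) ≠ 0 → lam l ≤ 1) {e : VB n d →₀ ℕ} (he : e ∈ p.support)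
    {b : VB n d} (hb : e b ≠ 0) {l : Fin n}
    (hl : (l : ℕ) ≠ 0) (hbl : b.1 l ≠ 0) {m : Fin n} (hm : (m : ℕ) ≠ 0) :
    b.1 m = if m = l then 1 else 0 := by
  have hone : ∀ m : Fin n, (m : ℕ) ≠ 0 → b.1 m ≠ 0 → lam m = 1 ∧ b.1 m = 1 := by
    intro m hm hbm
    have hle := mul_le_weight_apply e b m
    rw [weight_eq_of_mem_hwv hp he] at hle
    have := hhook m hm
    have := Nat.pos_of_ne_zero (mul_ne_zero hb hbm)
    have hlam : lam m = 1 := by omega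
    refine ⟨hlam, (eq_one_of_weight_apply_eq_one ?_ hb hbm).2⟩
    rw [weight_eq_of_mem_hwv hp he, hlam]
  split_ifs with hml
  · exact (hone m hm (hml ▸ hbl)).2
  · by_contra hbm
    rcases lt_or_gt_of_ne hml with hlt | hlt
    · have := apply_eq_zero_or_apply_eq_zero hp hlt (hone m hm hbm).1 (hone l hl hbl).1 he hb
      tauto
    · have := apply_eq_zero_or_apply_eq_zero hp hlt (hone l hl hbl).1 (hone m hm hbm).1 he hb
      tauto

theorem eq_of_apply_ne_zero_of_hook (hp : p ∈ hwv n d lam)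
    (hhook : ∀ l : Fin n, (l : ℕ) ≠ 0 → lam l ≤ 1) {e e' : VB n d →₀ ℕ} (he : e ∈ p.support)
    (he' : e' ∈ p.support) {b b' : VB n d} (hb : e b ≠ 0) (hb' : e' b' ≠ 0) {l : Fin n}
    (hl : (l : ℕ) ≠ 0) (hbl : b.1 l ≠ 0) (hb'l : b'.1 l ≠ 0) : b = b' :=
  Subtype.ext <| Finsupp.eq_of_degree_eq_of_forall_ne ⟨0, l.pos⟩ (b.2.trans b'.2.symm)
    fun m hm => by
      have hm0 : (m : ℕ) ≠ 0 := fun h => hm (Fin.ext h)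
      rw [apply_eq_ite_of_hook hp hhook he hb hl hbl hm0,
        apply_eq_ite_of_hook hp hhook he' hb' hl hb'l hm0]

theorem hwv_eq_bot_of_hook (h1 : 1 < n) (hlam1 : lam ⟨1, h1⟩ = 1)
    (hhook : ∀ l : Fin n, (l : ℕ) ≠ 0 → lam l ≤ 1) : hwv n d lam = ⊥ := by
  refine (Submodule.eq_bot_iff _).mpr fun p hp => ?_
  by_contra hp0
  obtain ⟨e, he⟩ := support_nonempty.mpr hp0
  have hw : ∀ e ∈ p.support, Finsupp.weight VB.weight e ⟨1, h1⟩ = 1 := fun e he => by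
    rw [weight_eq_of_mem_hwv hp he, hlam1]
  have hfix := glAct_transvection_eq_self_of_mem_hwv hp (i := ⟨0, by omega⟩) (j := ⟨1, h1⟩)
    (Fin.mk_lt_mk.mpr one_pos)
  obtain ⟨e', he', hne, hraise⟩ := exists_ne_raiseExponent_eq hfix hw he
  obtain ⟨b, hb, hbj⟩ :=
    exists_apply_ne_zero_of_weight_apply_ne_zero e (by rw [hw e he]; exact one_ne_zero)
  obtain ⟨b', hb', hb'j⟩ :=
    exists_apply_ne_zero_of_weight_apply_ne_zero e' (by rw [hw e' he']; exact one_ne_zero)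
  obtain rfl := eq_of_apply_ne_zero_of_hook hp hhook he he' hb hb' one_ne_zero hbj hb'j
  exact hne (eq_of_raiseExponent_eq (hw e' he') (hw e he) hb' hb hbj hraise)

end HighestWeight

theorem eq_single_of_weight_eq (hn : 0 < n) (hd : d ≠ 0) {k : ℕ} {e : VB n d →₀ ℕ}
    (h : Finsupp.weight VB.weight e = fun i : Fin n => if (i : ℕ) = 0 then k * d else 0) :
    e = Finsupp.single (VB.single ⟨0, hn⟩ d) k := by
  have hsupp : ∀ b, e b ≠ 0 → b = VB.single ⟨0, hn⟩ d := fun b hb =>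
    Subtype.ext <| Finsupp.eq_of_degree_eq_of_forall_ne ⟨0, hn⟩
      (b.2.trans (Finsupp.degree_single _ _).symm) fun l hl => by
        have hl0 : (l : ℕ) ≠ 0 := fun h0 => hl (Fin.ext h0)
        have hle : e b * b.1 l ≤ 0 := by simpa [h, hl0] using mul_le_weight_apply e b l
        rw [VB.single, Finsupp.single_eq_of_ne hl]
        exact (mul_eq_zero.mp (Nat.le_zero.mp hle)).resolve_left hb
  have he : e = Finsupp.single (VB.single ⟨0, hn⟩ d) (e (VB.single ⟨0, hn⟩ d)) :=
    Finsupp.eq_single_iff.mpr ⟨fun b hb => Finset.mem_singleton.mpr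
      (hsupp b (Finsupp.mem_support_iff.mp hb)), rfl⟩
  have h0 := congrFun h ⟨0, hn⟩
  rw [he, Finsupp.weight_single, Pi.smul_apply, smul_eq_mul, if_pos rfl] at h0
  change _ * Finsupp.single _ d _ = _ at h0
  rw [Finsupp.single_eq_same] at h0
  rw [he, Nat.eq_of_mul_eq_mul_right (Nat.pos_of_ne_zero hd) h0]

theorem glAct_X_single_of_unipotent (hn : 0 < n) {u : Matrix (Fin n) (Fin n) ℂ}
    (hdiag : ∀ i, u i i = 1) (hlow : ∀ i j, j < i → u i j = 0) :
    glAct n d u (X (VB.single ⟨0, hn⟩ d)) = X (VB.single ⟨0, hn⟩ d) := by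
  rw [glAct_X, algHom_monomial_eq_self, toS_monomial, one_smul]
  intro c hc
  obtain rfl : c = ⟨0, hn⟩ := Finset.mem_singleton.mp (Finsupp.support_single_subset hc)
  rw [aeval_X, Finset.sum_eq_single ⟨0, hn⟩ (fun a _ ha => by
      rw [hlow a _ (Fin.lt_def.mpr (Nat.pos_of_ne_zero fun h => ha (Fin.ext h))), zero_smul])
    (fun h => absurd (Finset.mem_univ _) h), hdiag, one_smul]

theorem X_single_pow_mem_hwv (hn : 0 < n) (k : ℕ) :
    X (VB.single ⟨0, hn⟩ d) ^ k ∈ hwv n d fun i => if (i : ℕ) = 0 then k * d else 0 := by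
  refine mem_hwv_iff.mpr ⟨fun t => ?_, fun u hdiag hlow => by
    rw [map_pow, glAct_X_single_of_unipotent hn hdiag hlow]⟩
  rw [map_pow, glAct_diagonal_X, smul_pow, ← Finset.prod_pow]
  congr 1
  refine Finset.prod_congr rfl fun i _ => ?_
  rw [← pow_mul]
  congr 1
  change Finsupp.single _ d i * k = _
  split_ifs with hi
  · rw [show i = ⟨0, hn⟩ from Fin.ext hi, Finsupp.single_eq_same, mul_comm]
  · rw [Finsupp.single_eq_of_ne fun h => hi (congrArg Fin.val h), zero_mul]

theorem hwv_eq_span (hn : 0 < n) (hd : d ≠ 0) (k : ℕ) :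
    hwv n d (fun i => if (i : ℕ) = 0 then k * d else 0) =
      Submodule.span ℂ {X (VB.single ⟨0, hn⟩ d) ^ k} := by
  refine le_antisymm (fun p hp => ?_)
    ((Submodule.span_singleton_le_iff_mem _ _).mpr (X_single_pow_mem_hwv hn k))
  rw [(isWeightedHomogeneous_of_mem_hwv hp).eq_monomial_of_unique_weight
    fun e he => eq_single_of_weight_eq hn hd he, X_pow_eq_monomial, ← mul_one (coeff _ p),
    ← smul_eq_mul, ← smul_monomial]
  exact Submodule.smul_mem _ _ (Submodule.mem_span_singleton_self _)

/-- Hook multiplicities in the plethysm `S = Sym(Sym^d V)` (`dim V = n`):  if `λ` is a hook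
partition with `λ_2 = 1`, then the multiplicity of `S_λ V` in `S` is zero; if
`λ = (kd, 0, …, 0)` for `k ≥ 0`, the multiplicity is `1`. -/
theorem stmt_15 (n d : ℕ) (hn : 2 ≤ n) (hd : 1 ≤ d) :
    (∀ lam : Fin n → ℕ, Antitone lam → lam ⟨1, by omega⟩ = 1 →
      Module.finrank ℂ (hwv n d lam) = 0) ∧
    (∀ k : ℕ,
      Module.finrank ℂ (hwv n d fun i => if (i : ℕ) = 0 then k * d else 0) = 1) := by
  refine ⟨fun lam hanti hlam1 => ?_, fun k => ?_⟩
  · have hhook : ∀ l : Fin n, (l : ℕ) ≠ 0 → lam l ≤ 1 := fun l hl =>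
      hlam1 ▸ hanti (Fin.le_def.mpr (Nat.one_le_iff_ne_zero.mpr hl))
    rw [hwv_eq_bot_of_hook (by omega) hlam1 hhook, finrank_bot]
  · rw [hwv_eq_span (by omega) (by omega), finrank_span_singleton (pow_ne_zero _ (X_ne_zero _))]
end

section
/- Let λ = (λ_1 ≥ ··· ≥ λ_n) ∈ Z^n be dominant with n ≥ 2, and assume |λ| = λ_1 + ··· + λ_n ≡ 0 (mod d) and |μ| ≡ 0 (mod d) for a partition μ ∈ Z^n. Suppose ō(μ) = (μ_2,…,μ_n) equals λ^{n-j} := (λ_1+1-u_d,…,λ_{n-j-1}+1-u_d, λ_{n-j+1}-u_d,…,λ_n-u_d) for some 0 ≤ j ≤ n-2, where u_d = C(n-1+d, n). Then k := (μ_1 - λ_{n-j} + u_d + (n-1-j))/d is a positive integer. -/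
set_option maxHeartbeats 1000000 in
/-- Let `λ = (λ_1 ≥ ⋯ ≥ λ_n) ∈ ℤ^n` be dominant (`n ≥ 2`), and `μ ∈ ℤ^n` a partition,
with `|λ| ≡ |μ| ≡ 0 (mod d)`.  Suppose `ō(μ) = (μ_2, …, μ_n)` equals `λ^{n-j}` for some
`0 ≤ j ≤ n-2`, where `u_d = C(n-1+d, n)`.  Then
`k = (μ_1 - λ_{n-j} + u_d + (n-1-j))/d` is a positive integer, i.e. the numerator equals
`d·k` for a (unique) integer `k > 0`. -/
theorem stmt_18 (n d : ℕ) (hn : 2 ≤ n) (hd : 1 ≤ d)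
    (l μ : Fin n → ℤ) (hl : Antitone l) (hμ : Antitone μ) (hμ0 : ∀ i, 0 ≤ μ i)
    (hldiv : (d : ℤ) ∣ ∑ i, l i) (hμdiv : (d : ℤ) ∣ ∑ i, μ i)
    (j : ℕ) (hj : j ≤ n - 2)
    (hbar : ∀ t : Fin (n - 1),
      μ ⟨(t : ℕ) + 1, by have := t.isLt; omega⟩ =
        lamb n ((n - 1 + d).choose n : ℤ) l ⟨n - j - 1, by omega⟩ t) :
    ∃ k : ℤ, 0 < k ∧
      μ ⟨0, by omega⟩ - l ⟨n - j - 1, by omega⟩ + ((n - 1 + d).choose n : ℤ) +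
          ((n : ℤ) - 1 - j) = (d : ℤ) * k := by
  have hn1 : 1 ≤ n - 1 := by omega
  set u : ℤ := ((n - 1 + d).choose n : ℤ) with hu
  set i0 : ℕ := n - j - 1 with hi0
  have hi0n : i0 < n := by omega
  have hi01 : 1 ≤ i0 := by omega
  -- extended functions
  set L : ℕ → ℤ := fun t => if h : t < n then l ⟨t, h⟩ else 0 with hL
  set M : ℕ → ℤ := fun t => if h : t < n then μ ⟨t, h⟩ else 0 with hM
  have hLval : ∀ (t : ℕ) (h : t < n), L t = l ⟨t, h⟩ := fun t h => dif_pos h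
  have hMval : ∀ (t : ℕ) (h : t < n), M t = μ ⟨t, h⟩ := fun t h => dif_pos h
  have hbar' : ∀ t, t < n - 1 → M (t + 1) =
      if t < i0 then L t + 1 - u else L (t + 1) - u := by
    intro t ht
    have h1 : t + 1 < n := by omega
    rw [hMval _ h1]
    have := hbar ⟨t, ht⟩
    rw [this]
    unfold lamb
    simp only
    by_cases hcase : t < i0
    · rw [if_pos hcase, if_pos (by simpa using hcase), hLval t (by omega)]
    · rw [if_neg hcase, if_neg (by simpa using hcase), hLval (t+1) h1]
  -- sums as range sums
  have hSL : ∑ i, l i = ∑ t ∈ Finset.range n, L t := by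
    rw [← Fin.sum_univ_eq_sum_range L n]
    exact Finset.sum_congr rfl (fun i _ => (hLval i i.isLt).symm)
  have hSM : ∑ i, μ i = ∑ t ∈ Finset.range n, M t := by
    rw [← Fin.sum_univ_eq_sum_range M n]
    exact Finset.sum_congr rfl (fun i _ => (hMval i i.isLt).symm)
  -- split M sum
  have hMsplit : ∑ t ∈ Finset.range n, M t
      = M 0 + ∑ t ∈ Finset.range (n - 1), M (t + 1) := by
    have hnn : n = (n - 1) + 1 := by omega
    calc ∑ t ∈ Finset.range n, M t = ∑ t ∈ Finset.range ((n - 1) + 1), M t := by rw [← hnn]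
      _ = ∑ t ∈ Finset.range (n - 1), M (t + 1) + M 0 := Finset.sum_range_succ' M (n - 1)
      _ = _ := by ring
  -- compute the shifted sum
  have hshift : ∑ t ∈ Finset.Ico i0 (n - 1), L (t + 1)
      = ∑ t ∈ Finset.Ico (i0 + 1) n, L t := by
    rw [Finset.sum_Ico_eq_sum_range, Finset.sum_Ico_eq_sum_range]
    have hc : n - 1 - i0 = n - (i0 + 1) := by omega
    rw [hc]
    exact Finset.sum_congr rfl (fun t _ => by congr 1; omega)
  have hLsplit : ∑ t ∈ Finset.range n, L t
      = ∑ t ∈ Finset.range i0, L t + L i0 + ∑ t ∈ Finset.Ico (i0 + 1) n, L t := by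
    rw [Finset.range_eq_Ico, ← Finset.sum_Ico_consecutive L (Nat.zero_le i0) (le_of_lt hi0n),
      Finset.sum_eq_sum_Ico_succ_bot hi0n L, ← Finset.range_eq_Ico]
    ring
  have hmain : ∑ t ∈ Finset.range (n - 1), M (t + 1)
      = ∑ t ∈ Finset.range n, L t - L i0 + (i0 : ℤ) * (1 - u) - (j : ℤ) * u := by
    have h1 : ∑ t ∈ Finset.range (n - 1), M (t + 1)
        = ∑ t ∈ Finset.range i0, (L t + 1 - u)
          + ∑ t ∈ Finset.Ico i0 (n - 1), (L (t + 1) - u) := by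
      rw [Finset.range_eq_Ico,
        ← Finset.sum_Ico_consecutive (fun t => M (t + 1)) (Nat.zero_le i0) (by omega : i0 ≤ n - 1),
        ← Finset.range_eq_Ico]
      congr 1
      · exact Finset.sum_congr rfl fun t ht => by
          rw [hbar' t (by have := Finset.mem_range.mp ht; omega),
            if_pos (Finset.mem_range.mp ht)]
      · exact Finset.sum_congr rfl fun t ht => by
          have := Finset.mem_Ico.mp ht
          rw [hbar' t (by omega), if_neg (by omega)]
    rw [h1]
    have h2 : ∑ t ∈ Finset.range i0, (L t + 1 - u)
        = ∑ t ∈ Finset.range i0, L t + (i0 : ℤ) * (1 - u) := by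
      rw [show (fun t => L t + 1 - u) = (fun t => L t + (1 - u)) from funext fun t => by ring]
      rw [Finset.sum_add_distrib, Finset.sum_const, Finset.card_range, nsmul_eq_mul]
    have h3 : ∑ t ∈ Finset.Ico i0 (n - 1), (L (t + 1) - u)
        = ∑ t ∈ Finset.Ico (i0 + 1) n, L t - (j : ℤ) * u := by
      rw [Finset.sum_sub_distrib, hshift, Finset.sum_const, Nat.card_Ico, nsmul_eq_mul]
      have : n - 1 - i0 = j := by omega
      rw [this]
    rw [h2, h3, hLsplit]
    ring
  -- divisibility data
  obtain ⟨a, ha⟩ := hμdiv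
  obtain ⟨b, hb⟩ := hldiv
  -- the key choose identity: n * u = d * C(n-1+d, n-1)
  have hchoose : (n : ℤ) * u = (d : ℤ) * ((n - 1 + d).choose (n - 1) : ℤ) := by
    have h := Nat.choose_succ_right_eq (n - 1 + d) (n - 1)
    have hsub : n - 1 + d - (n - 1) = d := by omega
    have hnn : n - 1 + 1 = n := by omega
    rw [hsub, hnn] at h
    have : ((n - 1 + d).choose n * n : ℤ) = ((n - 1 + d).choose (n - 1) * d : ℤ) := by
      exact_mod_cast congrArg (Nat.cast : ℕ → ℤ) h
    linarith [this]
  refine ⟨a - b + ((n - 1 + d).choose (n - 1) : ℤ), ?_, ?_⟩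
  · -- positivity: first show the numerator is positive
    have hM0 : μ ⟨0, by omega⟩ = M 0 := (hMval 0 (by omega)).symm
    have hLi0 : l ⟨n - j - 1, by omega⟩ = L i0 := (hLval i0 hi0n).symm
    have hM1 : M 1 = L 0 + 1 - u := by
      rw [hbar' 0 (by omega), if_pos (show 0 < i0 from hi01)]
    have hmono : M 1 ≤ M 0 := by
      rw [hMval 0 (by omega), hMval 1 (by omega)]
      exact hμ (Fin.mk_le_mk.mpr (by omega))
    have hlmono : L i0 ≤ L 0 := by
      rw [hLval 0 (by omega), hLval i0 hi0n]
      exact hl (Fin.mk_le_mk.mpr (by omega))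
    have hNpos : 0 < M 0 - L i0 + u + ((n : ℤ) - 1 - j) := by
      have hj' : (j : ℤ) ≤ (n : ℤ) - 2 := by
        have : (j : ℤ) ≤ ((n - 2 : ℕ) : ℤ) := by exact_mod_cast hj
        omega
      linarith [hmono, hM1, hlmono, hj']
    have hdk : M 0 - L i0 + u + ((n : ℤ) - 1 - j)
        = (d : ℤ) * (a - b + ((n - 1 + d).choose (n - 1) : ℤ)) := by
      have hi0cast : (i0 : ℤ) = (n : ℤ) - 1 - (j : ℤ) := by
        have : (j : ℤ) ≤ ((n - 2 : ℕ) : ℤ) := by exact_mod_cast hj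
        simp only [hi0]
        push_cast [Nat.cast_sub (by omega : j + 1 ≤ n)]
        omega
      have e1' : (d : ℤ) * a
          = M 0 + ((d : ℤ) * b - L i0 + (i0 : ℤ) * (1 - u) - (j : ℤ) * u) := by
        rw [← ha, hSM, hMsplit, hmain, ← hSL, hb]
      linear_combination (-1 : ℤ) * e1' + (u - 1) * hi0cast + hchoose
    rw [hdk] at hNpos
    have hdpos : (0 : ℤ) < d := by exact_mod_cast hd
    nlinarith [hNpos, hdpos]
  · -- the identity
    have hM0 : μ ⟨0, by omega⟩ = M 0 := (hMval 0 (by omega)).symm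
    have hLi0 : l ⟨n - j - 1, by omega⟩ = L i0 := (hLval i0 hi0n).symm
    have hi0cast : (i0 : ℤ) = (n : ℤ) - 1 - (j : ℤ) := by
      have : (j : ℤ) ≤ ((n - 2 : ℕ) : ℤ) := by exact_mod_cast hj
      simp only [hi0]
      push_cast [Nat.cast_sub (by omega : j + 1 ≤ n)]
      omega
    have e1' : (d : ℤ) * a
        = M 0 + ((d : ℤ) * b - L i0 + (i0 : ℤ) * (1 - u) - (j : ℤ) * u) := by
      rw [← ha, hSM, hMsplit, hmain, ← hSL, hb]
    rw [hM0, hLi0]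
    linear_combination (-1 : ℤ) * e1' + (u - 1) * hi0cast + hchoose
end
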